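/- arXiv:1802.05848 — 6 statements merged into one kernel-verified Lean document; each statement's English description precedes it below -/
import Mathlib

section
/- If in the matching M_x we have pairs (σ_1,τ_1), (σ_2,τ_2), ..., (σ_n,τ_n) with τ_i = σ_i ∪ {x}, x ∉ σ_i, and σ_{i+1} ⊂ τ_i with |τ_i \ σ_{i+1}| = 1 for all i (indices mod n), then τ_1 = τ_n; consequently no nontrivial alternating cycle exists in M_x. -/
/-! Each covering step `σ (i+1) ⋖ τ i = σ i ∪ {x}` must delete `x` itself, since `x ∉ σ (i+1)`;
hence `σ (i+1) = σ i` and the `τ`'s are constant along the chain `0, 1, …, n-1`. -/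

theorem Finset.eq_of_subset_insert_of_card_sdiff_eq_one {X : Type*} [DecidableEq X] {x : X}
    {s t : Finset X} (hxs : x ∉ s) (hxt : x ∉ t) (hts : t ⊆ insert x s)
    (hcard : (insert x s \ t).card = 1) : t = s := by
  have hsub : t ⊆ s := (Finset.subset_insert_iff_of_notMem hxt).mp hts
  have hcard' : s.card ≤ t.card := by
    rw [Finset.card_sdiff_of_subset hts, Finset.card_insert_of_notMem hxs] at hcard
    omega
  exact Finset.eq_of_subset_of_card_le hsub hcard'

theorem tau_first_eq_tau_last_general {X : Type*} [DecidableEq X] (x : X)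
    (n : ℕ) (σ τ : ℕ → Finset X)
    (hτ : ∀ i < n, τ i = insert x (σ i) ∧ x ∉ σ i)
    (hcov : ∀ i < n, σ ((i + 1) % n) ⊂ τ i ∧ ((τ i) \ (σ ((i + 1) % n))).card = 1) :
    τ 0 = τ (n - 1) := by
  have step : ∀ i, i + 1 < n → τ (i + 1) = τ i := by
    intro i hi
    obtain ⟨hτi, hxσi⟩ := hτ i (by omega)
    obtain ⟨hτi', hxσi'⟩ := hτ (i + 1) hi
    obtain ⟨hsub, hcard⟩ := hcov i (by omega)
    rw [Nat.mod_eq_of_lt hi, hτi] at hsub hcard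
    rw [hτi', hτi, Finset.eq_of_subset_insert_of_card_sdiff_eq_one hxσi hxσi' hsub.subset hcard]
  have const : ∀ k, k ≤ n - 1 → τ k = τ 0 := by
    intro k
    induction k with
    | zero => intro _; rfl
    | succ m ih => intro hm; rw [step m (by omega), ih (by omega)]
  exact (const (n - 1) le_rfl).symm

/-- If in the matching `M_x` we have pairs `(σ_1,τ_1), …, (σ_n,τ_n)`
with `τ_i = σ_i ∪ {x}`, `x ∉ σ_i`, and `σ_{i+1}` covered by `τ_i`
(i.e. `σ_{i+1} ⊂ τ_i` with `|τ_i \ σ_{i+1}| = 1`) for all `i` (indices mod `n`),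
then `τ_1 = τ_n`; consequently no nontrivial alternating cycle exists in `M_x`.
(Here faces are indexed `0, …, n-1`, so the conclusion reads `τ 0 = τ (n-1)`.) -/
theorem tau_first_eq_tau_last {X : Type*} [DecidableEq X] (x : X)
    (n : ℕ) (hn : 2 ≤ n) (σ τ : ℕ → Finset X)
    (hτ : ∀ i < n, τ i = insert x (σ i) ∧ x ∉ σ i)
    (hcov : ∀ i < n, σ ((i + 1) % n) ⊂ τ i ∧ ((τ i) \ (σ ((i + 1) % n))).card = 1) :
    τ 0 = τ (n - 1) :=
  tau_first_eq_tau_last_general x n σ τ hτ hcov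
end

section
/- A subset σ of N({i,i+1}) (the neighborhood of {i,i+1} in KG_{2,k}) is a face of the neighborhood complex of KG_{2,k} that is NOT a face of the neighborhood complex of S_{2,k} if and only if C_σ = {i, i+1} and σ contains {j, j+1} for some j ≠ i in [k+4] (all arithmetic mod k+4). -/
open Finset

/-- Potential vertices of `KG_{2,k}`: finite subsets of `[k+4]` (modelled as `ZMod (k+4)`);
actual vertices are those of cardinality 2. -/
abbrev Vtx (k : ℕ) := Finset (ZMod (k + 4))

/-- `S_σ`, the union of the pairs in `σ`. -/
def Sσ {k : ℕ} (σ : Finset (Vtx k)) : Finset (ZMod (k + 4)) := σ.sup id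

/-- `C_σ = [k+4] \ S_σ`. -/
def Cσ {k : ℕ} (σ : Finset (Vtx k)) : Finset (ZMod (k + 4)) := Finset.univ \ σ.sup id

/-- Adjacency in the Kneser graph `KG_{2,k}`: two 2-subsets that are disjoint. -/
def kgAdj {k : ℕ} (u v : Vtx k) : Prop := u.card = 2 ∧ v.card = 2 ∧ Disjoint u v

/-- A stable vertex: a 2-subset containing no two cyclically consecutive elements. -/
def IsStable {k : ℕ} (u : Vtx k) : Prop := u.card = 2 ∧ ∀ a ∈ u, a + 1 ∉ u

/-- Adjacency in `S_{2,k}`: a Kneser edge at least one of whose endpoints is stable. -/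
def sAdj {k : ℕ} (u v : Vtx k) : Prop := kgAdj u v ∧ (IsStable u ∨ IsStable v)

/-- `σ` is a face of the neighborhood complex `N(KG_{2,k})`: the members of `σ`
have a common neighbor in `KG_{2,k}`. -/
def kgFace {k : ℕ} (σ : Finset (Vtx k)) : Prop :=
  ∃ v : Vtx k, v.card = 2 ∧ ∀ u ∈ σ, kgAdj v u

/-- `σ` is a face of the neighborhood complex `N(S_{2,k})`. -/
def sFace {k : ℕ} (σ : Finset (Vtx k)) : Prop :=
  ∃ v : Vtx k, v.card = 2 ∧ ∀ u ∈ σ, sAdj v u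

/-!
A common `KG_{2,k}`-neighbour of `σ` is exactly a 2-subset of `C_σ`, so `{i, i+1}` always
witnesses that `σ` is a face of `N(KG_{2,k})`. The only non-stable 2-sets are the consecutive
pairs `{j, j+1}`. If `C_σ` is larger than `{i, i+1}` it contains a stable 2-set, which is a
common `S_{2,k}`-neighbour of `σ`; if `C_σ = {i, i+1}`, the only candidate common neighbour is
the non-stable `{i, i+1}`, and it fails exactly when `σ` also contains a non-stable pair.
-/

namespace KneserStable

variable {k : ℕ}

lemma natCast_ne_zero_of_lt {m : ℕ} (h0 : 0 < m) (hm : m < k + 4) : (m : ZMod (k + 4)) ≠ 0 := by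
  rw [Ne, ZMod.natCast_eq_zero_iff]
  exact Nat.not_dvd_of_pos_of_lt h0 hm

lemma self_ne_add_one (x : ZMod (k + 4)) : x ≠ x + 1 :=
  left_ne_add.mpr (by exact_mod_cast natCast_ne_zero_of_lt (m := 1) (by omega) (by omega))

lemma card_pair_add_one (x : ZMod (k + 4)) : ({x, x + 1} : Vtx k).card = 2 :=
  card_pair (self_ne_add_one x)

lemma not_isStable_pair_add_one (x : ZMod (k + 4)) : ¬ IsStable ({x, x + 1} : Vtx k) :=
  fun h => h.2 x (by simp) (by simp)

lemma isStable_pair {x y : ZMod (k + 4)} (hne : x ≠ y) (hyx : y ≠ x + 1) (hxy : x ≠ y + 1) :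
    IsStable ({x, y} : Vtx k) := by
  refine ⟨card_pair hne, ?_⟩
  intro a ha
  simp only [mem_insert, mem_singleton, not_or] at ha ⊢
  rcases ha with rfl | rfl
  · exact ⟨(self_ne_add_one a).symm, Ne.symm hyx⟩
  · exact ⟨Ne.symm hxy, (self_ne_add_one a).symm⟩

lemma eq_pair_add_one_of_not_isStable {u : Vtx k} (hu : u.card = 2) (hns : ¬ IsStable u) :
    ∃ j : ZMod (k + 4), u = {j, j + 1} := by
  simp only [IsStable, hu, true_and, not_forall, not_not] at hns
  obtain ⟨j, hj, hj1⟩ := hns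
  refine ⟨j, (eq_of_subset_of_card_le ?_ (by rw [hu, card_pair_add_one])).symm⟩
  exact insert_subset hj (singleton_subset_iff.mpr hj1)

/-- The stable 2-set is `{i, c}` for an extra element `c`, or `{i+1, i-1}` when `c = i - 1`. -/
lemma exists_isStable_subset {C : Finset (ZMod (k + 4))} {i : ZMod (k + 4)}
    (hC : ({i, i + 1} : Vtx k) ⊂ C) : ∃ v : Vtx k, IsStable v ∧ v ⊆ C := by
  obtain ⟨c, hcC, hci⟩ := exists_of_ssubset hC
  simp only [mem_insert, mem_singleton, not_or] at hci
  by_cases hc : c = i - 1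
  · subst hc
    have h2 : (2 : ZMod (k + 4)) ≠ 0 := by
      exact_mod_cast natCast_ne_zero_of_lt (m := 2) (by omega) (by omega)
    have h3 : (3 : ZMod (k + 4)) ≠ 0 := by
      exact_mod_cast natCast_ne_zero_of_lt (m := 3) (by omega) (by omega)
    refine ⟨{i + 1, i - 1}, isStable_pair ?_ ?_ ?_, ?_⟩
    · exact fun h => h2 (by linear_combination h)
    · exact fun h => h3 (by linear_combination -h)
    · exact fun h => (self_ne_add_one (i - 1)) (by linear_combination -h)
    · exact insert_subset (hC.subset (by simp)) (singleton_subset_iff.mpr hcC)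
  · refine ⟨{i, c}, isStable_pair (Ne.symm hci.1) hci.2 fun h => hc (by linear_combination -h), ?_⟩
    exact insert_subset (hC.subset (by simp)) (singleton_subset_iff.mpr hcC)

lemma subset_Cσ_iff {σ : Finset (Vtx k)} {v : Vtx k} :
    v ⊆ Cσ σ ↔ ∀ u ∈ σ, Disjoint v u := by
  simp [Cσ, subset_sdiff, Finset.disjoint_sup_right]

lemma sFace_iff {σ : Finset (Vtx k)} (hσ : ∀ u ∈ σ, u.card = 2) :
    sFace σ ↔ ∃ v : Vtx k, v.card = 2 ∧ v ⊆ Cσ σ ∧ ∀ u ∈ σ, IsStable v ∨ IsStable u := by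
  simp only [sFace, sAdj, kgAdj, subset_Cσ_iff]
  constructor
  · rintro ⟨v, hv, hvσ⟩
    exact ⟨v, hv, fun u hu => (hvσ u hu).1.2.2, fun u hu => (hvσ u hu).2⟩
  · rintro ⟨v, hv, hdisj, hst⟩
    exact ⟨v, hv, fun u hu => ⟨⟨hv, hσ u hu, hdisj u hu⟩, hst u hu⟩⟩

end KneserStable

open KneserStable in
/-- A subset `σ` of `N({i,i+1})` (the `KG_{2,k}`-neighborhood of
`{i,i+1}`) is a face of `N(KG_{2,k})` that is not a face of `N(S_{2,k})` iff
`C_σ = {i, i+1}` and `σ` contains `{j, j+1}` for some `j ≠ i` (mod `k+4`). -/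
theorem mem_X_iff {k : ℕ} (i : ZMod (k + 4)) (σ : Finset (Vtx k))
    (hσ : ∀ u ∈ σ, kgAdj ({i, i + 1} : Vtx k) u) :
    (kgFace σ ∧ ¬ sFace σ) ↔
      (Cσ σ = {i, i + 1} ∧ ∃ j : ZMod (k + 4), j ≠ i ∧ ({j, j + 1} : Vtx k) ∈ σ) := by
  have hcard : ∀ u ∈ σ, u.card = 2 := fun u hu => (hσ u hu).2.1
  have hiC : ({i, i + 1} : Vtx k) ⊆ Cσ σ := subset_Cσ_iff.mpr fun u hu => (hσ u hu).2.2
  rw [sFace_iff hcard]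
  constructor
  · rintro ⟨-, hns⟩
    have hunstable : ∃ u ∈ σ, ¬ IsStable u := by
      by_contra! h
      exact hns ⟨_, card_pair_add_one i, hiC, fun u hu => Or.inr (h u hu)⟩
    obtain ⟨u, hu, hus⟩ := hunstable
    obtain ⟨j, rfl⟩ := eq_pair_add_one_of_not_isStable (hcard u hu) hus
    have hji : j ≠ i := by
      rintro rfl
      exact disjoint_left.mp (hσ _ hu).2.2 (mem_insert_self j _) (mem_insert_self j _)
    refine ⟨?_, j, hji, hu⟩
    by_contra hC
    obtain ⟨v, hv, hvC⟩ := exists_isStable_subset (hiC.ssubset_of_ne (Ne.symm hC))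
    exact hns ⟨v, hv.1, hvC, fun _ _ => Or.inl hv⟩
  · rintro ⟨hC, j, -, hj⟩
    refine ⟨⟨{i, i + 1}, card_pair_add_one i, hσ⟩, ?_⟩
    rintro ⟨v, hv, hvC, hst⟩
    have hvi : v = {i, i + 1} := eq_of_subset_of_card_le (hC ▸ hvC) (by rw [hv, card_pair_add_one])
    rcases hst _ hj with h | h
    · exact not_isStable_pair_add_one i (hvi ▸ h)
    · exact not_isStable_pair_add_one j h
end

section
/- The face set of the neighborhood complex of KG_{2,k} is the disjoint union of the face set of the neighborhood complex of S_{2,k} and the sets X_{i,i+1} for i = 1, ..., k+4. -/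
open Finset

/-- `X_{i,i+1}`: subsets of the `KG_{2,k}`-neighborhood of `{i,i+1}` that are not
faces of `N(S_{2,k})`. -/
def Xset {k : ℕ} (i : ZMod (k + 4)) (σ : Finset (Vtx k)) : Prop :=
  (∀ u ∈ σ, kgAdj ({i, i + 1} : Vtx k) u) ∧ ¬ sFace σ

/-!
A common neighbour `v` of the faces of `N(KG_{2,k})` is either stable, and then it witnesses a
face of `N(S_{2,k})`, or it is a pair `{i, i+1}` of cyclically consecutive elements. The sets
`X_{i,i+1}` are disjoint because two distinct consecutive pairs `{i, i+1}` and `{i', i'+1}` always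
contain a stable pair (`{i, i'}`, or `{i, i+2}` when `i' = i+1`); being contained in their
union, it is disjoint from every vertex of a face in both `X`'s, which is therefore a face of
`N(S_{2,k})` after all.
-/

theorem ZMod.natCast_ne_zero_of_pos_of_lt {n c : ℕ} (hc : 0 < c) (hcn : c < n) :
    (c : ZMod n) ≠ 0 := by
  rw [Ne, ZMod.natCast_eq_zero_iff]
  exact Nat.not_dvd_of_pos_of_lt hc hcn

theorem ZMod.add_natCast_ne_self {n : ℕ} (a : ZMod n) {c : ℕ} (hc : 0 < c) (hcn : c < n) :
    a + c ≠ a :=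
  add_ne_left.2 (natCast_ne_zero_of_pos_of_lt hc hcn)

section

variable {k : ℕ}

theorem add_one_ne_self (a : ZMod (k + 4)) : a + 1 ≠ a := by
  exact_mod_cast ZMod.add_natCast_ne_self a (c := 1) one_pos (by omega)

theorem card_pair_add_one (a : ZMod (k + 4)) : ({a, a + 1} : Vtx k).card = 2 :=
  card_pair (add_one_ne_self a).symm

theorem isStable_pair {x y : ZMod (k + 4)} (hxy : x ≠ y) (hxy₁ : x + 1 ≠ y) (hyx₁ : y + 1 ≠ x) :
    IsStable ({x, y} : Vtx k) := by
  refine ⟨card_pair hxy, fun a ha => ?_⟩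
  simp only [mem_insert, mem_singleton] at ha ⊢
  rcases ha with rfl | rfl
  · exact not_or.2 ⟨add_one_ne_self a, hxy₁⟩
  · exact not_or.2 ⟨hyx₁, add_one_ne_self a⟩

theorem isStable_pair_add_two (a : ZMod (k + 4)) : IsStable ({a, a + 2} : Vtx k) := by
  have h₂ : a + 2 ≠ a := by exact_mod_cast ZMod.add_natCast_ne_self a (c := 2) two_pos (by omega)
  have h₃ : a + 2 + 1 ≠ a := by
    rw [add_assoc]; exact_mod_cast ZMod.add_natCast_ne_self a (c := 3) three_pos (by omega)
  refine isStable_pair h₂.symm ?_ h₃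
  rw [← one_add_one_eq_two, ← add_assoc]
  exact (add_one_ne_self _).symm

theorem exists_eq_pair_add_one_of_not_isStable {v : Vtx k} (hv : v.card = 2)
    (hs : ¬ IsStable v) : ∃ a, v = {a, a + 1} := by
  obtain ⟨a, ha, ha₁⟩ : ∃ a ∈ v, a + 1 ∈ v := by
    simpa [IsStable, hv] using hs
  refine ⟨a, (eq_of_subset_of_card_le ?_ ?_).symm⟩
  · exact insert_subset ha (singleton_subset_iff.2 ha₁)
  · rw [hv, card_pair_add_one]

theorem exists_isStable_subset_union_of_ne {i i' : ZMod (k + 4)} (hne : i ≠ i') :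
    ∃ w : Vtx k, IsStable w ∧ w ⊆ {i, i + 1} ∪ {i', i' + 1} := by
  by_cases h₁ : i' = i + 1
  · refine ⟨{i, i + 2}, isStable_pair_add_two i, ?_⟩
    simp [insert_subset_iff, h₁, add_assoc, one_add_one_eq_two]
  by_cases h₂ : i = i' + 1
  · refine ⟨{i', i' + 2}, isStable_pair_add_two i', ?_⟩
    simp [insert_subset_iff, h₂, add_assoc, one_add_one_eq_two]
  · exact ⟨{i, i'}, isStable_pair hne (Ne.symm h₁) (Ne.symm h₂), by simp [insert_subset_iff]⟩

theorem kgAdj_of_subset_union {w v v' u : Vtx k} (hw : w.card = 2) (hsub : w ⊆ v ∪ v')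
    (h : kgAdj v u) (h' : kgAdj v' u) : kgAdj w u :=
  ⟨hw, h.2.1, (disjoint_union_left.2 ⟨h.2.2, h'.2.2⟩).mono_left hsub⟩

theorem sFace_of_isStable_of_forall_kgAdj {σ : Finset (Vtx k)} {w : Vtx k} (hw : IsStable w)
    (h : ∀ u ∈ σ, kgAdj w u) : sFace σ :=
  ⟨w, hw.1, fun u hu => ⟨h u hu, .inl hw⟩⟩

theorem kgFace_iff_sFace_or_exists_xset (σ : Finset (Vtx k)) :
    kgFace σ ↔ sFace σ ∨ ∃ i : ZMod (k + 4), Xset i σ := by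
  constructor
  · rintro ⟨v, hv, hadj⟩
    by_cases hS : sFace σ
    · exact .inl hS
    have hvs : ¬ IsStable v := fun hvs => hS (sFace_of_isStable_of_forall_kgAdj hvs hadj)
    obtain ⟨a, rfl⟩ := exists_eq_pair_add_one_of_not_isStable hv hvs
    exact .inr ⟨a, hadj, hS⟩
  · rintro (⟨v, hv, hadj⟩ | ⟨i, hadj, -⟩)
    · exact ⟨v, hv, fun u hu => (hadj u hu).1⟩
    · exact ⟨{i, i + 1}, card_pair_add_one i, hadj⟩

theorem Xset.eq {σ : Finset (Vtx k)} {i i' : ZMod (k + 4)} (hX : Xset i σ) (hX' : Xset i' σ) :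
    i = i' := by
  by_contra hne
  obtain ⟨w, hw, hsub⟩ := exists_isStable_subset_union_of_ne hne
  exact hX.2 (sFace_of_isStable_of_forall_kgAdj hw fun u hu =>
    kgAdj_of_subset_union hw.1 hsub (hX.1 u hu) (hX'.1 u hu))

end

/-- The face set of `N(KG_{2,k})` is the disjoint union of the face
set of `N(S_{2,k})` and the sets `X_{i,i+1}`, `i ∈ [k+4]`. -/
theorem faces_partition {k : ℕ} (σ : Finset (Vtx k)) :
    (kgFace σ ↔ sFace σ ∨ ∃ i : ZMod (k + 4), Xset i σ) ∧
    ¬ (sFace σ ∧ ∃ i : ZMod (k + 4), Xset i σ) ∧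
    (∀ i i' : ZMod (k + 4), Xset i σ → Xset i' σ → i = i') :=
  ⟨kgFace_iff_sFace_or_exists_xset σ, fun ⟨hS, _, hX⟩ => hX.2 hS, fun _ _ => Xset.eq⟩
end

section
/- The map φ from the face poset of N(KG_{2,k}) to the chain a_1 > a_2 > ... > a_{k+4} > a, sending σ to a_i if σ ∈ X_{i,i+1} and to a if σ ∈ N(S_{2,k}), is well-defined and order-preserving: if τ ⊆ σ and τ ∈ X_{i,i+1}, then σ ∈ X_{i,i+1}. -/
open Finset

/-!
If `σ` has a common Kneser neighbour `v` and `τ ⊆ σ` lies in `X_{i,i+1}`, then `v = {i,i+1}`: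
otherwise some `x ∈ v` lies outside `{i,i+1}`, and one of `{i,x}`, `{i+1,x}` is stable (this
needs at least four points on the cycle) and disjoint from every member of `τ`, so `τ` would be a
face of `N(S_{2,k})`. Hence `σ` lies in the neighbourhood of `{i,i+1}`, and it is not a face of
`N(S_{2,k})` because `τ` is not.
-/

lemma ZMod.natCast_ne_zero_of_pos_of_lt_s8 {n m : ℕ} (hm : 0 < m) (hmn : m < n) :
    (m : ZMod n) ≠ 0 := by
  rw [Ne, ZMod.natCast_eq_zero_iff]
  exact fun h => absurd (Nat.le_of_dvd hm h) (by omega)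

instance {k : ℕ} : Fact (1 < k + 4) := ⟨by omega⟩

lemma sFace.mono {k : ℕ} {τ σ : Finset (Vtx k)} (hsub : τ ⊆ σ) (hσ : sFace σ) : sFace τ :=
  let ⟨w, hw, hadj⟩ := hσ
  ⟨w, hw, fun u hu => hadj u (hsub hu)⟩

lemma isStable_pair_s8 {k : ℕ} {a b : ZMod (k + 4)} (hab : a ≠ b) (hab' : a + 1 ≠ b)
    (hba : b + 1 ≠ a) : IsStable ({a, b} : Vtx k) := by
  refine ⟨card_pair hab, ?_⟩
  simp only [mem_insert, mem_singleton, forall_eq_or_imp, forall_eq, not_or]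
  exact ⟨⟨fun h => one_ne_zero (add_eq_left.mp h), hab'⟩,
    ⟨hba, fun h => one_ne_zero (add_eq_left.mp h)⟩⟩

lemma isStable_pair_or_isStable_pair_succ {k : ℕ} {i x : ZMod (k + 4)} (hxi : x ≠ i)
    (hxi' : x ≠ i + 1) : IsStable ({i, x} : Vtx k) ∨ IsStable ({i + 1, x} : Vtx k) := by
  have h1 : (1 : ZMod (k + 4)) ≠ 0 := one_ne_zero
  have h2 : (2 : ZMod (k + 4)) ≠ 0 :=
    mod_cast ZMod.natCast_ne_zero_of_pos_of_lt_s8 (m := 2) (by omega) (by omega)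
  have h3 : (3 : ZMod (k + 4)) ≠ 0 :=
    mod_cast ZMod.natCast_ne_zero_of_pos_of_lt_s8 (m := 3) (by omega) (by omega)
  by_cases hx : x + 1 = i
  · right
    exact isStable_pair_s8 (fun h => h2 (by linear_combination h + hx))
      (fun h => h3 (by linear_combination h + hx)) (fun h => h1 (by linear_combination hx - h))
  · exact Or.inl (isStable_pair_s8 hxi.symm hxi'.symm hx)

lemma sFace_of_isStable {k : ℕ} {τ : Finset (Vtx k)} {w : Vtx k} (hw : IsStable w)
    (hτ : ∀ u ∈ τ, u.card = 2 ∧ Disjoint w u) : sFace τ :=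
  ⟨w, hw.1, fun u hu => ⟨⟨hw.1, (hτ u hu).1, (hτ u hu).2⟩, Or.inl hw⟩⟩

lemma eq_pair_of_xset {k : ℕ} {i : ZMod (k + 4)} {τ : Finset (Vtx k)} (hτ : Xset i τ)
    {v : Vtx k} (hv : v.card = 2) (hvτ : ∀ u ∈ τ, Disjoint v u) : v = {i, i + 1} := by
  have hpair : ({i, i + 1} : Vtx k).card = 2 :=
    card_pair fun h => one_ne_zero (add_eq_left.mp h.symm)
  by_contra hne
  obtain ⟨x, hxv, hx⟩ := not_subset.mp fun hs => hne (eq_of_subset_of_card_le hs (by omega))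
  simp only [mem_insert, mem_singleton, not_or] at hx
  have hface : ∀ j ∈ ({i, i + 1} : Vtx k), IsStable ({j, x} : Vtx k) → sFace τ :=
    fun j hj hst => sFace_of_isStable hst fun u hu => ⟨(hτ.1 u hu).2.1,
      disjoint_insert_left.mpr ⟨disjoint_left.mp (hτ.1 u hu).2.2 hj,
        disjoint_singleton_left.mpr (disjoint_left.mp (hvτ u hu) hxv)⟩⟩
  rcases isStable_pair_or_isStable_pair_succ hx.1 hx.2 with hst | hst
  · exact hτ.2 (hface i (by simp) hst)
  · exact hτ.2 (hface (i + 1) (by simp) hst)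

/-- The map `φ` from the face poset of `N(KG_{2,k})` to the chain
`a_1 > a_2 > ⋯ > a_{k+4} > a`, sending `σ ∈ X_{i,i+1}` to `a_i` and
`σ ∈ N(S_{2,k})` to `a`, is well-defined and order-preserving; the key content:
if `τ ⊆ σ` are faces of `N(KG_{2,k})` and `τ ∈ X_{i,i+1}`, then `σ ∈ X_{i,i+1}`. -/
theorem X_upward_closed {k : ℕ} (i : ZMod (k + 4)) (τ σ : Finset (Vtx k))
    (hσ : kgFace σ) (hsub : τ ⊆ σ) (hτ : Xset i τ) : Xset i σ := by
  obtain ⟨v, hv, hvσ⟩ := hσ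
  have hv_eq : v = {i, i + 1} := eq_pair_of_xset hτ hv fun u hu => (hvσ u (hsub hu)).2.2
  subst hv_eq
  exact ⟨hvσ, fun hs => hτ.2 (hs.mono hsub)⟩
end

section
/- Let i ∈ [k+4], j ∈ I_i, t ∈ I_j^i. If σ ∈ F_{j,t}^i and {j,t} ∈ σ, then σ \ {{j,t}} ∈ F_{j,t}^i; and if σ ∈ F_{j,t}^i with {j,t} ∉ σ, then σ ∪ {{j,t}} ∈ F_{j,t}^i. Hence the map σ ↦ σ Δ {{j,t}} (symmetric difference) is an involution on F_{j,t}^i giving a perfect matching pairing σ \ {{j,t}} with σ ∪ {{j,t}}. -/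
open Finset

/-- `X_{i,i+1}` (explicit description): sets `σ` of vertices each disjoint from
`{i,i+1}`, with `C_σ = {i,i+1}`, containing `{j,j+1}` for some `j ≠ i`. -/
def XsetC {k : ℕ} (i : ZMod (k + 4)) (σ : Finset (Vtx k)) : Prop :=
  (∀ u ∈ σ, u.card = 2 ∧ Disjoint u ({i, i + 1} : Vtx k)) ∧
  Cσ σ = {i, i + 1} ∧
  ∃ j : ZMod (k + 4), j ≠ i ∧ ({j, j + 1} : Vtx k) ∈ σ

/-- `I_i = [k+4] \ {i-1, i, i+1}`. -/
def Ii {k : ℕ} (i : ZMod (k + 4)) : Finset (ZMod (k + 4)) :=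
  Finset.univ \ {i - 1, i, i + 1}

/-- `E_j^i ⊆ X_{i,i+1}`: those `σ` for which `j` is the least index in `I_i`
(with respect to the order of `[k+4]`, via `ZMod.val`) with `{j,j+1} ∈ σ`. -/
def Eji {k : ℕ} (i j : ZMod (k + 4)) (σ : Finset (Vtx k)) : Prop :=
  XsetC i σ ∧ ({j, j + 1} : Vtx k) ∈ σ ∧
    ∀ s ∈ Ii i, s.val < j.val → ({s, s + 1} : Vtx k) ∉ σ

/-- `I_j^i = [k+4] \ {i, i+1, j-1, j, j+1}`. -/
def Iji {k : ℕ} (i j : ZMod (k + 4)) : Finset (ZMod (k + 4)) :=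
  Finset.univ \ {i, i + 1, j - 1, j, j + 1}

/-- `𝓘_t = {r ∈ I_j^i : r < t}` (order of `[k+4]`, via `ZMod.val`). -/
def It {k : ℕ} (i j t : ZMod (k + 4)) : Finset (ZMod (k + 4)) :=
  (Iji i j).filter fun r => r.val < t.val

/-- `F_{j,t}^i`: those `σ ∈ E_j^i` such that for all `r ∈ 𝓘_t`, `{j,r} ∈ σ` and
`r ∈ C_{σ \ {j,r}}`, and either `{j,t} ∉ σ` or `C_{σ \ {j,t}} = {i,i+1}`. -/
def Fjt {k : ℕ} (i j t : ZMod (k + 4)) (σ : Finset (Vtx k)) : Prop :=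
  Eji i j σ ∧
  (∀ r ∈ It i j t, ({j, r} : Vtx k) ∈ σ ∧ r ∈ Cσ (σ.erase {j, r})) ∧
  (({j, t} : Vtx k) ∉ σ ∨ Cσ (σ.erase {j, t}) = {i, i + 1})

/-- `F_j^i`: those `σ ∈ E_j^i` with `{j,s} ∈ σ` and `C_{σ \ {j,s}} = {i,i+1,s}`
for every `s ∈ I_j^i`. -/
def Fj {k : ℕ} (i j : ZMod (k + 4)) (σ : Finset (Vtx k)) : Prop :=
  Eji i j σ ∧
  ∀ s ∈ Iji i j, ({j, s} : Vtx k) ∈ σ ∧ Cσ (σ.erase {j, s}) = {i, i + 1, s}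

/-! Removing `{j,t}` keeps `C_σ = {i,i+1}` by the last clause of `F_{j,t}^i` and only enlarges
each `C_{σ \ {j,r}}`. Adding `{j,t}` changes no `C`-set that matters: `j` and `t` lie outside
`{i,i+1}`, hence are already covered by `σ`, and `r ∉ {j,t}` for `r ∈ 𝓘_t`. Finally, since
`t ∉ {j-1, j+1}`, the pair `{j,t}` is never of the form `{s,s+1}`, so it does not interfere with
the minimality of `j` in `E_j^i`. -/

lemma pair_ne_succ_pair {G : Type*} [AddGroupWithOne G] [DecidableEq G] {j t : G}
    (htj : t ≠ j) (htj_succ : t ≠ j + 1) (htj_pred : t ≠ j - 1) (s : G) :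
    ({j, t} : Finset G) ≠ {s, s + 1} := by
  intro h
  have hj : j ∈ ({s, s + 1} : Finset G) := h ▸ mem_insert_self j {t}
  have ht : t ∈ ({s, s + 1} : Finset G) := h ▸ mem_insert_of_mem (mem_singleton_self t)
  simp only [mem_insert, mem_singleton] at hj ht
  rcases hj with rfl | rfl <;> rcases ht with rfl | rfl
  · exact htj rfl
  · exact htj_succ rfl
  · exact htj_pred (add_sub_cancel_right t 1).symm
  · exact htj rfl

lemma pair_ne_pair {α : Type*} [DecidableEq α] {a b c : α} (hca : c ≠ a) (hbc : b ≠ c) :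
    ({a, b} : Finset α) ≠ {a, c} := fun h => by
  have hc : c ∈ ({a, b} : Finset α) := h ▸ mem_insert_of_mem (mem_singleton_self c)
  simp only [mem_insert, mem_singleton] at hc
  exact hc.elim hca hbc.symm

section Cσ

variable {k : ℕ}

lemma mem_Cσ {x : ZMod (k + 4)} {ρ : Finset (Vtx k)} : x ∈ Cσ ρ ↔ ∀ u ∈ ρ, x ∉ u := by
  simp [Cσ, mem_sup]

lemma Cσ_anti {ρ ρ' : Finset (Vtx k)} (h : ρ ⊆ ρ') : Cσ ρ' ⊆ Cσ ρ :=
  fun _ hx => mem_Cσ.2 fun u hu => mem_Cσ.1 hx u (h hu)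

lemma Cσ_insert (u : Vtx k) (ρ : Finset (Vtx k)) : Cσ (insert u ρ) = Cσ ρ \ u := by
  ext x
  simp only [mem_Cσ, mem_insert, forall_eq_or_imp, mem_sdiff]
  tauto

end Cσ

lemma ne_of_mem_It {k : ℕ} {i j t r : ZMod (k + 4)} (hr : r ∈ It i j t) : r ≠ t ∧ r ≠ j := by
  simp only [It, Iji, mem_filter, mem_sdiff, mem_univ, true_and, mem_insert, mem_singleton,
    not_or] at hr
  exact ⟨fun h => (h ▸ hr.2).false, hr.1.2.2.2.1⟩

lemma mem_Iji {k : ℕ} {i j t : ZMod (k + 4)} :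
    t ∈ Iji i j ↔ t ≠ i ∧ t ≠ i + 1 ∧ t ≠ j - 1 ∧ t ≠ j ∧ t ≠ j + 1 := by
  simp [Iji]

section Eji

variable {k : ℕ} {i j : ZMod (k + 4)} {σ : Finset (Vtx k)} {u : Vtx k}

lemma Eji.notMem_pair (hσ : Eji i j σ) : j ∉ ({i, i + 1} : Vtx k) :=
  disjoint_left.1 (hσ.1.1 _ hσ.2.1).2 (mem_insert_self j _)

lemma Eji.ne (hσ : Eji i j σ) : j ≠ i := fun h => hσ.notMem_pair (by simp [h])

lemma Eji.erase (hσ : Eji i j σ) (hu : u ≠ {j, j + 1}) (hC : Cσ (σ.erase u) = {i, i + 1}) :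
    Eji i j (σ.erase u) := by
  have hji := hσ.ne
  obtain ⟨⟨hcard, -, -⟩, hjj, hmin⟩ := hσ
  have hjj' : ({j, j + 1} : Vtx k) ∈ σ.erase u := mem_erase.2 ⟨hu.symm, hjj⟩
  exact ⟨⟨fun v hv => hcard v (mem_of_mem_erase hv), hC, j, hji, hjj'⟩, hjj',
    fun s hs hsj h => hmin s hs hsj (mem_of_mem_erase h)⟩

lemma Eji.insert (hσ : Eji i j σ) (hcard : u.card = 2) (hdisj : Disjoint u {i, i + 1})
    (hu : ∀ s, u ≠ {s, s + 1}) : Eji i j (insert u σ) := by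
  have hji := hσ.ne
  obtain ⟨⟨hcards, hC, -⟩, hjj, hmin⟩ := hσ
  refine ⟨⟨?_, ?_, j, hji, mem_insert_of_mem hjj⟩, mem_insert_of_mem hjj, ?_⟩
  · intro v hv
    rcases mem_insert.1 hv with rfl | hv
    exacts [⟨hcard, hdisj⟩, hcards v hv]
  · rw [Cσ_insert, hC, sdiff_eq_self_of_disjoint hdisj.symm]
  · intro s hs hsj h
    rcases mem_insert.1 h with h | h
    exacts [hu s h.symm, hmin s hs hsj h]

end Eji

section Fjt

variable {k : ℕ} {i j t : ZMod (k + 4)} {σ : Finset (Vtx k)}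

lemma Fjt.erase (hσ : Fjt i j t σ) (ht : t ∈ Iji i j) (hmem : ({j, t} : Vtx k) ∈ σ) :
    Fjt i j t (σ.erase {j, t}) := by
  obtain ⟨hE, hIt, hlast⟩ := hσ
  obtain ⟨-, -, htj_pred, htj, htj_succ⟩ := mem_Iji.1 ht
  have hC : Cσ (σ.erase {j, t}) = {i, i + 1} := hlast.resolve_left (not_not.2 hmem)
  refine ⟨hE.erase (pair_ne_succ_pair htj htj_succ htj_pred j) hC, fun r hr => ?_,
    Or.inl (notMem_erase _ _)⟩
  obtain ⟨hjr_mem, hrC⟩ := hIt r hr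
  exact ⟨mem_erase.2 ⟨pair_ne_pair htj (ne_of_mem_It hr).1, hjr_mem⟩,
    Cσ_anti (erase_subset_erase _ (erase_subset _ _)) hrC⟩

lemma Fjt.insert (hσ : Fjt i j t σ) (ht : t ∈ Iji i j) (hmem : ({j, t} : Vtx k) ∉ σ) :
    Fjt i j t (insert {j, t} σ) := by
  obtain ⟨hE, hIt, -⟩ := hσ
  obtain ⟨hti, hti_succ, htj_pred, htj, htj_succ⟩ := mem_Iji.1 ht
  have hdisj : Disjoint ({j, t} : Vtx k) {i, i + 1} := by
    rw [disjoint_insert_left, disjoint_singleton_left]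
    exact ⟨hE.notMem_pair, by simp [hti, hti_succ]⟩
  refine ⟨hE.insert (card_pair htj.symm) hdisj (pair_ne_succ_pair htj htj_succ htj_pred),
    fun r hr => ?_, Or.inr (by rw [erase_insert hmem]; exact hE.1.2.1)⟩
  obtain ⟨hjr_mem, hrC⟩ := hIt r hr
  obtain ⟨hrt, hrj_ne⟩ := ne_of_mem_It hr
  refine ⟨mem_insert_of_mem hjr_mem, ?_⟩
  rw [erase_insert_of_ne (pair_ne_pair hrj_ne hrt.symm), Cσ_insert]
  exact mem_sdiff.2 ⟨hrC, by simp [hrj_ne, hrt]⟩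

end Fjt

theorem Fjt_toggle_general {k : ℕ} (i j t : ZMod (k + 4))
    (ht : t ∈ Iji i j) (σ : Finset (Vtx k)) (hσ : Fjt i j t σ) :
    (({j, t} : Vtx k) ∈ σ → Fjt i j t (σ.erase {j, t})) ∧
    (({j, t} : Vtx k) ∉ σ → Fjt i j t (insert ({j, t} : Vtx k) σ)) ∧
    (∀ toggle : Finset (Vtx k) → Finset (Vtx k),
      (toggle = fun ρ => if ({j, t} : Vtx k) ∈ ρ then ρ.erase {j, t}
                         else insert ({j, t} : Vtx k) ρ) →
      Fjt i j t (toggle σ) ∧ toggle (toggle σ) = σ) := by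
  refine ⟨hσ.erase ht, hσ.insert ht, fun toggle htoggle => ?_⟩
  subst htoggle
  by_cases hmem : ({j, t} : Vtx k) ∈ σ
  · simp only [hmem, if_true, notMem_erase, if_false]
    exact ⟨hσ.erase ht hmem, insert_erase hmem⟩
  · simp only [hmem, if_false, mem_insert_self, if_true]
    exact ⟨hσ.insert ht hmem, erase_insert hmem⟩

/-- `F_{j,t}^i` is closed under removing/adding the pair `{j,t}`;
hence `σ ↦ σ Δ {{j,t}}` is an involution on `F_{j,t}^i` giving a perfect
matching pairing `σ \ {{j,t}}` with `σ ∪ {{j,t}}`. -/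
theorem Fjt_toggle {k : ℕ} (i j t : ZMod (k + 4))
    (hj : j ∈ Ii i) (ht : t ∈ Iji i j) (σ : Finset (Vtx k)) (hσ : Fjt i j t σ) :
    (({j, t} : Vtx k) ∈ σ → Fjt i j t (σ.erase {j, t})) ∧
    (({j, t} : Vtx k) ∉ σ → Fjt i j t (insert ({j, t} : Vtx k) σ)) ∧
    (∀ toggle : Finset (Vtx k) → Finset (Vtx k),
      (toggle = fun ρ => if ({j, t} : Vtx k) ∈ ρ then ρ.erase {j, t}
                         else insert ({j, t} : Vtx k) ρ) →
      Fjt i j t (toggle σ) ∧ toggle (toggle σ) = σ) :=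
  Fjt_toggle_general i j t ht σ hσ
end

section
/- If M' is an acyclic matching on Δ' = Δ \ Δ_x and M_x is the canonical matching on Δ_x (pairing σ \ {x} with σ ∪ {x}), then M = M' ∪ M_x is an acyclic matching on Δ. -/
/-!
Faces of `Δ \ Δ_x` are never matched by `M_x`, so `M' ∪ M_x` is a matching. In an alternating
cycle, a down-step `u(aᵢ) ≻ aᵢ₊₁` cannot drop `x`: otherwise `u(aᵢ) ∈ Δ_x`, so `aᵢ` is matched
by `M_x` to it and `aᵢ = u(aᵢ) \ {x} = aᵢ₊₁`. Up-steps never drop `x` either, so `x ∈ aᵢ` holds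
for all `i` or for none. An `M_x`-edge `aᵢ ≺ aᵢ ∪ {x}` forces the first alternative while
`x ∉ aᵢ`, so the cycle lies in `M'`, which is acyclic.
-/

/-- A partial matching `M` on a family `Δ` of faces (ordered by inclusion). -/
def IsPartialMatching {X : Type*} [DecidableEq X] (Δ : Set (Finset X))
    (M : Set (Finset X × Finset X)) : Prop :=
  (∀ p ∈ M, p.1 ∈ Δ ∧ p.2 ∈ Δ ∧ p.1 ⋖ p.2) ∧
  (∀ p ∈ M, ∀ q ∈ M,
    (p.1 = q.1 ∨ p.1 = q.2 ∨ p.2 = q.1 ∨ p.2 = q.2) → p = q)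

/-- An alternating cycle `a₁ ≺ u(a₁) ≻ a₂ ≺ ⋯ ≺ u(a_m) ≻ a₁`, `m ≥ 2`, distinct `aᵢ`. -/
def HasCycle {X : Type*} [DecidableEq X] (M : Set (Finset X × Finset X)) : Prop :=
  ∃ m : ℕ, ∃ a b : Fin (m + 2) → Finset X,
    Function.Injective a ∧ (∀ i, (a i, b i) ∈ M) ∧ ∀ i, a (i + 1) ⋖ b i

theorem Fin.forall_of_imp_add_one {n : ℕ} {P : Fin (n + 1) → Prop}
    (h : ∀ i, P i → P (i + 1)) {i : Fin (n + 1)} (hi : P i) (j : Fin (n + 1)) : P j := by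
  open Fin.NatCast in
  have reach : ∀ k : ℕ, P (i + k) := by
    intro k
    induction k with
    | zero => simpa using hi
    | succ k ih => simpa [add_assoc] using h _ ih
  open Fin.NatCast in
  simpa [Fin.cast_val_eq_self] using reach (j - i).val

section ElementMatching

variable {X : Type*} [DecidableEq X]

/-- The faces `Δ_x` matched by `M_x`. -/
def elementMatchingFaces (Δ : Set (Finset X)) (x : X) : Set (Finset X) :=
  {σ ∈ Δ | σ.erase x ∈ Δ ∧ insert x σ ∈ Δ}

/-- The element matching `M_x`. -/
def elementMatching (Δ : Set (Finset X)) (x : X) : Set (Finset X × Finset X) :=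
  {p | ∃ σ : Finset X, p = (σ.erase x, insert x σ) ∧ σ.erase x ∈ Δ ∧ insert x σ ∈ Δ}

variable {Δ : Set (Finset X)} {x : X}

theorem mem_elementMatching_iff {p : Finset X × Finset X} :
    p ∈ elementMatching Δ x ↔ x ∉ p.1 ∧ p.2 = insert x p.1 ∧ p.1 ∈ Δ ∧ p.2 ∈ Δ := by
  constructor
  · rintro ⟨σ, rfl, hlow, hhigh⟩
    exact ⟨Finset.notMem_erase x σ, by grind, hlow, hhigh⟩
  · rintro ⟨hx, hp, hlow, hhigh⟩
    refine ⟨p.1, ?_, by rwa [Finset.erase_eq_of_notMem hx], by rwa [← hp]⟩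
    rw [Finset.erase_eq_of_notMem hx, ← hp]

theorem elementMatchingFaces_subset : elementMatchingFaces Δ x ⊆ Δ := fun _ hσ => hσ.1

theorem IsPartialMatching.union {Δ₁ Δ₂ : Set (Finset X)} {M₁ M₂ : Set (Finset X × Finset X)}
    (h₁ : IsPartialMatching Δ₁ M₁) (h₂ : IsPartialMatching Δ₂ M₂) (hΔ : Disjoint Δ₁ Δ₂) :
    IsPartialMatching (Δ₁ ∪ Δ₂) (M₁ ∪ M₂) := by
  have separate : ∀ p ∈ M₁, ∀ q ∈ M₂,
      ¬ (p.1 = q.1 ∨ p.1 = q.2 ∨ p.2 = q.1 ∨ p.2 = q.2) := by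
    intro p hp q hq hshare
    obtain ⟨hp1, hp2, -⟩ := h₁.1 p hp
    obtain ⟨hq1, hq2, -⟩ := h₂.1 q hq
    rcases hshare with h | h | h | h
    · exact Set.disjoint_left.mp hΔ hp1 (h ▸ hq1)
    · exact Set.disjoint_left.mp hΔ hp1 (h ▸ hq2)
    · exact Set.disjoint_left.mp hΔ hp2 (h ▸ hq1)
    · exact Set.disjoint_left.mp hΔ hp2 (h ▸ hq2)
  constructor
  · rintro p (hp | hp)
    · obtain ⟨hlow, hhigh, hcov⟩ := h₁.1 p hp
      exact ⟨.inl hlow, .inl hhigh, hcov⟩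
    · obtain ⟨hlow, hhigh, hcov⟩ := h₂.1 p hp
      exact ⟨.inr hlow, .inr hhigh, hcov⟩
  · rintro p (hp | hp) q (hq | hq) hshare
    · exact h₁.2 p hp q hq hshare
    · exact absurd hshare (separate p hp q hq)
    · exact absurd (by tauto) (separate q hq p hp)
    · exact h₂.2 p hp q hq hshare

theorem isPartialMatching_elementMatching :
    IsPartialMatching (elementMatchingFaces Δ x) (elementMatching Δ x) := by
  constructor
  · intro p hp
    obtain ⟨hx, hp2, hlow, hhigh⟩ := mem_elementMatching_iff.mp hp
    refine ⟨⟨hlow, ?_, ?_⟩, ⟨hhigh, ?_, ?_⟩, ?_⟩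
    · rwa [Finset.erase_eq_of_notMem hx]
    · rwa [← hp2]
    · rwa [hp2, Finset.erase_insert hx]
    · rwa [hp2, Finset.insert_idem, ← hp2]
    · rw [hp2]
      exact Finset.covBy_insert hx
  · intro p hp q hq hshare
    obtain ⟨hpx, hp2, -⟩ := mem_elementMatching_iff.mp hp
    obtain ⟨hqx, hq2, -⟩ := mem_elementMatching_iff.mp hq
    have hlow : p.1 = q.1 := by
      rcases hshare with h | h | h | h
      · exact h
      · exact absurd (h ▸ hq2 ▸ Finset.mem_insert_self x q.1) hpx
      · exact absurd (h ▸ hp2 ▸ Finset.mem_insert_self x p.1) hqx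
      · rw [← Finset.erase_insert hpx, ← Finset.erase_insert hqx, ← hp2, ← hq2, h]
    exact Prod.ext hlow (by rw [hp2, hq2, hlow])

variable {M' : Set (Finset X × Finset X)}

theorem isPartialMatching_union_elementMatching
    (hM' : IsPartialMatching (Δ \ elementMatchingFaces Δ x) M') :
    IsPartialMatching Δ (M' ∪ elementMatching Δ x) := by
  have h := hM'.union isPartialMatching_elementMatching Set.disjoint_sdiff_left
  rwa [Set.sdiff_union_of_subset elementMatchingFaces_subset] at h

theorem mem_next_of_mem_of_cycle {m : ℕ} {a b : Fin (m + 2) → Finset X}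
    (hM' : IsPartialMatching (Δ \ elementMatchingFaces Δ x) M')
    (hinj : Function.Injective a) (hmem : ∀ i, (a i, b i) ∈ M' ∪ elementMatching Δ x)
    (hcov : ∀ i, a (i + 1) ⋖ b i) {i : Fin (m + 2)} (hx : x ∈ b i) : x ∈ a (i + 1) := by
  have hfaces := (isPartialMatching_union_elementMatching hM').1
  by_contra hxa
  obtain ⟨y, hy, hins⟩ := Finset.covBy_iff_exists_insert.mp (hcov i)
  obtain rfl : x = y := by
    rcases Finset.mem_insert.mp (hins ▸ hx) with h | h
    · exact h
    · exact absurd h hxa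
  have hdown : (b i).erase x = a (i + 1) := by rw [← hins, Finset.erase_insert hy]
  have hbi : b i ∈ elementMatchingFaces Δ x := by
    have hbΔ := (hfaces _ (hmem i)).2.1
    refine ⟨hbΔ, ?_, by rwa [Finset.insert_eq_self.mpr hx]⟩
    rw [hdown]
    exact (hfaces _ (hmem (i + 1))).1
  have hMx : (a i, b i) ∈ elementMatching Δ x :=
    (hmem i).resolve_left fun h => (hM'.1 _ h).2.1.2 hbi
  obtain ⟨hxi, hup, -⟩ : x ∉ a i ∧ b i = insert x (a i) ∧ _ := mem_elementMatching_iff.mp hMx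
  have : a i = a (i + 1) := by rw [← hdown, hup, Finset.erase_insert hxi]
  exact (by simp : i + 1 ≠ i) (hinj this).symm

theorem not_hasCycle_union_elementMatching
    (hM' : IsPartialMatching (Δ \ elementMatchingFaces Δ x) M') (hM'acyclic : ¬ HasCycle M') :
    ¬ HasCycle (M' ∪ elementMatching Δ x) := by
  rintro ⟨m, a, b, hinj, hmem, hcov⟩
  have hstep : ∀ i, x ∈ a i → x ∈ a (i + 1) := fun i hx =>
    mem_next_of_mem_of_cycle hM' hinj hmem hcov
      (((isPartialMatching_union_elementMatching hM').1 _ (hmem i)).2.2.le hx)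
  have hall : ∀ i, (a i, b i) ∈ M' := fun i => (hmem i).resolve_right fun h => by
    obtain ⟨hxi, hup, -⟩ := mem_elementMatching_iff.mp h
    have hx_next :=
      mem_next_of_mem_of_cycle hM' hinj hmem hcov (hup ▸ Finset.mem_insert_self x _)
    exact hxi (Fin.forall_of_imp_add_one hstep hx_next i)
  exact hM'acyclic ⟨m, a, b, hinj, hall, hcov⟩

end ElementMatching

/-- If `M'` is an acyclic matching on `Δ' = Δ \ Δ_x` and `M_x` is
the canonical matching on `Δ_x` (pairing `σ \ {x}` with `σ ∪ {x}`), then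
`M = M' ∪ M_x` is an acyclic matching on `Δ`. -/
theorem union_with_Mx_acyclic {X : Type*} [DecidableEq X]
    (Δ : Set (Finset X)) (x : X)
    (Δx : Set (Finset X))
    (hΔx : Δx = {σ ∈ Δ | σ.erase x ∈ Δ ∧ insert x σ ∈ Δ})
    (Mx : Set (Finset X × Finset X))
    (hMx : Mx = {p | ∃ σ : Finset X,
      p = (σ.erase x, insert x σ) ∧ σ.erase x ∈ Δ ∧ insert x σ ∈ Δ})
    (M' : Set (Finset X × Finset X))
    (hM' : IsPartialMatching (Δ \ Δx) M')
    (hM'acyclic : ¬ HasCycle M') :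
    IsPartialMatching Δ (M' ∪ Mx) ∧ ¬ HasCycle (M' ∪ Mx) := by
  subst hΔx hMx
  exact ⟨isPartialMatching_union_elementMatching hM',
    not_hasCycle_union_elementMatching hM' hM'acyclic⟩
end
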